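/- arXiv:1502.03538 — 6 statements merged into one kernel-verified Lean document; each statement's English description precedes it below -/
import Mathlib

section
/- In an ultrametric space, every nonempty open set can be partitioned into pairwise disjoint open balls. -/
open Metric Set

theorem stmt_7 {X : Type*} [MetricSpace X]
    (hU : ∀ x y z : X, dist x y ≤ max (dist x z) (dist z y))
    (U : Set X) (hUopen : IsOpen U) (hUne : U.Nonempty) :
    ∃ P : Set (Set X), (∀ B ∈ P, ∃ (c : X) (r : ℝ), B = Metric.ball c r) ∧
      P.PairwiseDisjoint id ∧ ⋃₀ P = U := by
  classical
  -- In an ultrametric space, any point of a ball is a center of it.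
  have hball : ∀ (c c' : X) (r : ℝ), dist c c' < r → ball c r = ball c' r := by
    intro c c' r h
    ext w
    simp only [mem_ball]
    constructor
    · intro hw
      calc dist w c' ≤ max (dist w c) (dist c c') := hU w c' c
        _ < r := max_lt hw h
    · intro hw
      have h' : dist c' c < r := by rwa [dist_comm]
      calc dist w c ≤ max (dist w c') (dist c' c) := hU w c c'
        _ < r := max_lt hw h'
  set S : X → Set ℝ := fun x => {r : ℝ | ball x r ⊆ U} with hS
  by_cases hb : ∀ x ∈ U, BddAbove (S x)
  · -- bounded case
    set ρ : X → ℝ := fun x => sSup (S x) with hρ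
    have hSne : ∀ x ∈ U, ∃ ε > 0, ε ∈ S x := by
      intro x hx
      obtain ⟨ε, hε, hsub⟩ := Metric.isOpen_iff.mp hUopen x hx
      exact ⟨ε, hε, hsub⟩
    have hρpos : ∀ x ∈ U, 0 < ρ x := by
      intro x hx
      obtain ⟨ε, hε, hεS⟩ := hSne x hx
      exact lt_of_lt_of_le hε (le_csSup (hb x hx) hεS)
    have hsub : ∀ x ∈ U, ball x (ρ x) ⊆ U := by
      intro x hx w hw
      obtain ⟨ε, hε, hεS⟩ := hSne x hx
      obtain ⟨s, hsS, hws⟩ := exists_lt_of_lt_csSup ⟨ε, hεS⟩ hw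
      exact hsS hws
    have hmem : ∀ x ∈ U, x ∈ ball x (ρ x) := by
      intro x hx
      simpa [mem_ball] using hρpos x hx
    have key : ∀ x ∈ U, ∀ y ∈ U, ρ x ≤ ρ y → ∀ z, z ∈ ball x (ρ x) →
        z ∈ ball y (ρ y) → ball x (ρ x) = ball y (ρ y) := by
      intro x hx y hy hle z hzx hzy
      rw [mem_ball] at hzx hzy
      have hxz : dist x z < ρ y := lt_of_lt_of_le (by rwa [dist_comm]) hle
      have hzy' : dist z y < ρ y := hzy
      have hxy : dist x y < ρ y := lt_of_le_of_lt (hU x y z) (max_lt hxz hzy')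
      have heq : ball x (ρ y) = ball y (ρ y) := hball x y _ hxy
      have hmemS : ρ y ∈ S x := by
        show ball x (ρ y) ⊆ U
        rw [heq]; exact hsub y hy
      have hge : ρ y ≤ ρ x := le_csSup (hb x hx) hmemS
      have hrr : ρ x = ρ y := le_antisymm hle hge
      rw [hrr, heq]
    refine ⟨(fun x => ball x (ρ x)) '' U, ?_, ?_, ?_⟩
    · rintro B ⟨x, hx, rfl⟩
      exact ⟨x, ρ x, rfl⟩
    · rintro B ⟨x, hx, rfl⟩ B' ⟨y, hy, rfl⟩ hne
      simp only [Function.onFun, id_eq]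
      rw [Set.disjoint_left]
      intro z hz hz'
      rcases le_total (ρ x) (ρ y) with h | h
      · exact hne (key x hx y hy h z hz hz')
      · exact hne (key y hy x hx h z hz' hz).symm
    · apply Set.Subset.antisymm
      · rintro w ⟨B, ⟨x, hx, rfl⟩, hw⟩
        exact hsub x hx hw
      · intro x hx
        exact ⟨ball x (ρ x), ⟨x, hx, rfl⟩, hmem x hx⟩
  · -- unbounded case: U = univ
    push_neg at hb
    obtain ⟨x, hx, hnb⟩ := hb
    have hUuniv : U = univ := by
      apply Set.eq_univ_of_forall
      intro y
      rw [not_bddAbove_iff] at hnb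
      obtain ⟨r, hrS, hr⟩ := hnb (dist y x)
      exact hrS (by simpa [mem_ball] using hr)
    refine ⟨Set.range (fun c => ball c (1 : ℝ)), ?_, ?_, ?_⟩
    · rintro B ⟨c, rfl⟩
      exact ⟨c, 1, rfl⟩
    · rintro B ⟨a, rfl⟩ B' ⟨b, rfl⟩ hne
      simp only [Function.onFun, id_eq]
      rw [Set.disjoint_left]
      intro z hz hz'
      rw [mem_ball] at hz hz'
      apply hne
      have h1 : ball a (1 : ℝ) = ball z 1 := hball a z 1 (by rwa [dist_comm])
      have h2 : ball b (1 : ℝ) = ball z 1 := hball b z 1 (by rwa [dist_comm])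
      show ball a (1:ℝ) = ball b 1
      rw [h1, h2]
    · rw [hUuniv]
      apply Set.eq_univ_of_forall
      intro y
      exact ⟨ball y 1, ⟨y, rfl⟩, by simp⟩
end

section
/- Let (X,d) be a compact ultrametric space and f : X → X a local radial contraction. Then there exists a finite partition of X into open balls B_0,...,B_{n-1} such that each B_i is f-contractive: there is α_i ∈ (0,1) with d(f(x), f(u)) ≤ α_i·d(x,u) for all x,u ∈ B_i (where x is the center). -/
/-!
Every point has a ball on which `f` contracts radially; by compactness finitely many of these
balls cover `X`. In an ultrametric space two balls are either nested or disjoint, so the maximal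
balls among these finitely many are pairwise disjoint and still cover `X`.
-/

open Metric Set

theorem Set.Finite.sUnion_setOf_maximal {α : Type*} {S : Set (Set α)} (hS : S.Finite) :
    ⋃₀ {B | Maximal (· ∈ S) B} = ⋃₀ S := by
  refine (sUnion_mono fun B hB => hB.prop).antisymm (sUnion_subset fun A hA => ?_)
  obtain ⟨B, hAB, hB⟩ := hS.exists_le_maximal hA
  exact hAB.trans (subset_sUnion_of_mem hB)

theorem Set.pairwiseDisjoint_setOf_maximal_of_nested {α : Type*} {S : Set (Set α)}
    (hnest : ∀ A ∈ S, ∀ B ∈ S, A ⊆ B ∨ B ⊆ A ∨ Disjoint A B) :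
    {B | Maximal (· ∈ S) B}.PairwiseDisjoint id := by
  intro A hA B hB hAB
  rcases hnest A hA.prop B hB.prop with hsub | hsub | hdisj
  · exact absurd (hA.eq_of_subset hB.prop hsub) hAB
  · exact absurd (hB.eq_of_subset hA.prop hsub).symm hAB
  · exact hdisj

theorem Set.Finite.exists_fin_pairwise_disjoint_iUnion_eq {ι α : Type*} {g : ι → Set α}
    {M : Set (Set α)} (hM : M.Finite) (hdisj : M.PairwiseDisjoint id) (hg : M ⊆ range g) :
    ∃ (n : ℕ) (c : Fin n → ι),
      ⋃ i, g (c i) = ⋃₀ M ∧ Pairwise (Function.onFun Disjoint fun i => g (c i)) := by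
  have : Finite M := hM.to_subtype
  obtain ⟨n, ⟨e⟩⟩ := Finite.exists_equiv_fin M
  choose c hc using fun i : Fin n => hg (e.symm i).2
  refine ⟨n, c, ?_, fun i j hij => ?_⟩
  · simp only [hc, sUnion_eq_iUnion]
    exact e.symm.surjective.iUnion_comp fun B : M => (B : Set α)
  · simp only [Function.onFun, hc]
    exact hdisj (e.symm i).2 (e.symm j).2 ((Subtype.val_injective.comp e.symm.injective).ne hij)

theorem IsUltrametricDist.exists_fin_pairwise_disjoint_balls_cover {X : Type*} [MetricSpace X]
    [IsUltrametricDist X] [CompactSpace X] {r : X → ℝ} (hr : ∀ x, 0 < r x) :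
    ∃ (n : ℕ) (c : Fin n → X), (⋃ i, ball (c i) (r (c i))) = univ ∧
      Pairwise (Function.onFun Disjoint fun i => ball (c i) (r (c i))) := by
  obtain ⟨t, -, hcover⟩ := isCompact_univ.elim_nhds_subcover (fun x => ball x (r x))
    fun x _ => ball_mem_nhds x (hr x)
  set S := (fun x => ball x (r x)) '' (t : Set X)
  have hS : S.Finite := t.finite_toSet.image _
  have hMS : {B | Maximal (· ∈ S) B} ⊆ S := fun B hB => hB.prop
  have hnest : ∀ A ∈ S, ∀ B ∈ S, A ⊆ B ∨ B ⊆ A ∨ Disjoint A B := by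
    rintro _ ⟨x, -, rfl⟩ _ ⟨y, -, rfl⟩
    exact IsUltrametricDist.ball_subset_trichotomy x y _ _
  obtain ⟨n, c, hunion, hdisj⟩ := (hS.subset hMS).exists_fin_pairwise_disjoint_iUnion_eq
    (pairwiseDisjoint_setOf_maximal_of_nested hnest) (hMS.trans (image_subset_range _ _))
  refine ⟨n, c, ?_, hdisj⟩
  rw [hunion, hS.sUnion_setOf_maximal, sUnion_image]
  exact univ_subset_iff.mp hcover

theorem stmt_9 {X : Type*} [MetricSpace X] [CompactSpace X]
    (hU : ∀ x y z : X, dist x y ≤ max (dist x z) (dist z y))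
    (f : X → X)
    (hlrc : ∀ x : X, ∃ N ∈ nhds x, ∃ α ∈ Set.Ioo (0 : ℝ) 1,
      ∀ u ∈ N, dist (f x) (f u) ≤ α * dist x u) :
    ∃ (n : ℕ) (c : Fin n → X) (r : Fin n → ℝ) (α : Fin n → ℝ),
      (⋃ i, Metric.ball (c i) (r i)) = Set.univ ∧
      Pairwise (Function.onFun Disjoint (fun i => Metric.ball (c i) (r i))) ∧
      ∀ i, α i ∈ Set.Ioo (0 : ℝ) 1 ∧
        ∀ u ∈ Metric.ball (c i) (r i), dist (f (c i)) (f u) ≤ α i * dist (c i) u := by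
  have : IsUltrametricDist X := ⟨fun x y z => hU x z y⟩
  have hball : ∀ x, ∃ r > 0, ∃ α ∈ Ioo (0 : ℝ) 1,
      ∀ u ∈ ball x r, dist (f x) (f u) ≤ α * dist x u := by
    intro x
    obtain ⟨N, hN, α, hα, hcontr⟩ := hlrc x
    obtain ⟨r, hr, hrN⟩ := Metric.mem_nhds_iff.mp hN
    exact ⟨r, hr, α, hα, fun u hu => hcontr u (hrN hu)⟩
  choose r hr α hα hcontr using hball
  obtain ⟨n, c, hunion, hdisj⟩ := IsUltrametricDist.exists_fin_pairwise_disjoint_balls_cover hr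
  exact ⟨n, c, r ∘ c, α ∘ c, hunion, hdisj, fun i => ⟨hα _, hcontr _⟩⟩
end

section
/- The distance set {d(x,y) : x ≠ y ∈ X} of a separable ultrametric space (X,d) is countable. -/
theorem stmt_10 {X : Type*} [MetricSpace X] [TopologicalSpace.SeparableSpace X]
    (hU : ∀ x y z : X, dist x y ≤ max (dist x z) (dist z y)) :
    Set.Countable {d : ℝ | ∃ x y : X, x ≠ y ∧ d = dist x y} := by
  -- isoceles lemma: if dist x z < dist x y then dist z y = dist x y
  have iso : ∀ x y z : X, dist x z < dist x y → dist z y = dist x y := by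
    intro x y z h
    have h1 : dist z y ≤ dist x y := by
      have := hU z y x
      rw [dist_comm z x] at this
      exact this.trans (max_le (le_of_lt h) le_rfl)
    have h2 : dist x y ≤ dist z y := by
      have := hU x y z
      rcases max_cases (dist x z) (dist z y) with ⟨he, _⟩ | ⟨he, _⟩
      · rw [he] at this; exact absurd this (not_le.mpr h)
      · rwa [he] at this
    linarith
  obtain ⟨s, hsc, hsd⟩ := TopologicalSpace.exists_countable_dense X
  have : {d : ℝ | ∃ x y : X, x ≠ y ∧ d = dist x y} ⊆
      (fun p : X × X => dist p.1 p.2) '' (s ×ˢ s) := by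
    rintro d ⟨x, y, hxy, rfl⟩
    have hpos : 0 < dist x y := dist_pos.mpr hxy
    obtain ⟨a, ha, hax⟩ := Metric.dense_iff.mp hsd x (dist x y) hpos
    rw [Metric.mem_ball] at ha
    have haxy : dist a y = dist x y := iso x y a (by rw [dist_comm]; exact ha)
    have hpos' : 0 < dist a y := haxy ▸ hpos
    obtain ⟨b, hb, hby⟩ := Metric.dense_iff.mp hsd y (dist a y) hpos'
    rw [Metric.mem_ball] at hb
    have hbay : dist b a = dist y a := by
      apply iso y a b; rw [dist_comm]; rw [dist_comm a y] at hb; exact hb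
    refine ⟨(a, b), ⟨hax, hby⟩, ?_⟩
    simp only
    rw [dist_comm a b, hbay, dist_comm y a, haxy]
  exact Set.Countable.mono this ((hsc.prod hsc).image _)
end

section
/- A set A ⊆ (0,∞) is the set of nonzero distances of some nonempty perfect compact ultrametric space if and only if A can be enumerated as a strictly decreasing sequence (d_i) with limit 0. -/
/-!
A compact ultrametric space is covered by finitely many balls of radius `ε`, and every distance
`≥ ε` is the distance between the centres of the balls containing its endpoints; so only finitely
many distances exceed each `ε > 0`, while perfectness produces arbitrarily small ones. Listing
such a set of positive reals from the top gives a strictly decreasing null sequence.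

Conversely, for such a sequence `d`, the Cantor space `ℕ → Bool` with `dist x y = d n`, `n` the
first index where `x` and `y` differ, is a compact perfect ultrametric space, and flipping the
`n`-th bit of a point moves it by exactly `d n`.
-/

open Filter Set Topology Function

lemma IsUltrametricDist.dist_eq_of_dist_lt {X : Type*} [PseudoMetricSpace X] [IsUltrametricDist X]
    {x x' y : X} (h : dist x x' < dist x y) : dist x' y = dist x y := by
  rw [dist_eq_max_of_dist_ne_dist x' x y (by rw [dist_comm]; exact h.ne), dist_comm x' x,
    max_eq_right h.le]

def distanceSet (X : Type*) [Dist X] : Set ℝ :=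
  {r | ∃ x y : X, x ≠ y ∧ r = dist x y}

section distanceSet

variable {X : Type*}

lemma distanceSet_subset_Ioi [MetricSpace X] : distanceSet X ⊆ Ioi 0 := by
  rintro _ ⟨x, y, hxy, rfl⟩
  exact dist_pos.2 hxy

lemma exists_mem_distanceSet_lt [PseudoMetricSpace X] [Nonempty X] [∀ x : X, (𝓝[≠] x).NeBot]
    {ε : ℝ} (hε : 0 < ε) : ∃ r ∈ distanceSet X, r < ε := by
  obtain ⟨x⟩ := ‹Nonempty X›
  obtain ⟨y, hy, hxy⟩ :=
    (𝓝[≠] x).nonempty_of_mem (inter_mem_nhdsWithin {x}ᶜ (Metric.ball_mem_nhds x hε))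
  exact ⟨dist x y, ⟨x, y, Ne.symm hy, rfl⟩, by rwa [dist_comm]⟩

lemma IsUltrametricDist.finite_distanceSet_inter_Ici [PseudoMetricSpace X] [IsUltrametricDist X]
    [CompactSpace X] {ε : ℝ} (hε : 0 < ε) : (distanceSet X ∩ Ici ε).Finite := by
  obtain ⟨t, -, ht, hcover⟩ := finite_cover_balls_of_compact (isCompact_univ (X := X)) hε
  refine (ht.image2 dist ht).subset ?_
  rintro _ ⟨⟨x, y, -, rfl⟩, hxy⟩
  obtain ⟨c, hc, hxc⟩ := mem_iUnion₂.1 (hcover (mem_univ x))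
  obtain ⟨c', hc', hyc'⟩ := mem_iUnion₂.1 (hcover (mem_univ y))
  rw [Metric.mem_ball] at hxc hyc'
  have hcy : dist c y = dist x y := dist_eq_of_dist_lt (hxc.trans_le hxy)
  have hcc' : dist c' c = dist y c :=
    dist_eq_of_dist_lt (by rw [dist_comm y c, hcy]; exact hyc'.trans_le hxy)
  exact ⟨c, hc, c', hc', by rw [dist_comm, hcc', dist_comm, hcy]⟩

end distanceSet

/-- Ranking `a` by the number of elements of `A` above it embeds `A` into `ℕ` order-reversingly;
composing with the enumeration of the image lists `A` in decreasing order. -/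
lemma Set.Infinite.exists_strictAnti_range_eq {α : Type*} [LinearOrder α] {A : Set α}
    (hinf : A.Infinite) (hfin : ∀ a ∈ A, (A ∩ Ici a).Finite) :
    ∃ d : ℕ → α, StrictAnti d ∧ range d = A := by
  set r : α → ℕ := fun a => (A ∩ Ioi a).ncard
  have hr : StrictAntiOn r A := fun a ha b hb hab =>
    ncard_lt_ncard ⟨inter_subset_inter_right _ (Ioi_subset_Ioi hab.le),
      fun h => (h ⟨hb, hab⟩).2.false⟩
      ((hfin a ha).subset (inter_subset_inter_right _ Ioi_subset_Ici_self))
  have : Infinite (r '' A) := (hinf.image hr.injOn).to_subtype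
  set e := Nat.Subtype.orderIsoOfNat (r '' A)
  choose d hdA hrd using fun n => (e n).2
  refine ⟨d, fun m n hmn => ?_, ?_⟩
  · refine (hr.lt_iff_gt (hdA m) (hdA n)).1 ?_
    rw [hrd, hrd]
    exact e.strictMono hmn
  · refine (range_subset_iff.2 hdA).antisymm fun a ha => ?_
    obtain ⟨n, hn⟩ := e.surjective ⟨r a, a, ha, rfl⟩
    exact ⟨n, hr.injOn (hdA n) ha (by rw [hrd, hn])⟩

lemma exists_strictAnti_tendsto_zero_range_eq {A : Set ℝ} (hA : A ⊆ Ioi 0)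
    (hsmall : ∀ ε > 0, ∃ a ∈ A, a < ε) (hfin : ∀ ε > 0, (A ∩ Ici ε).Finite) :
    ∃ d : ℕ → ℝ, StrictAnti d ∧ Tendsto d atTop (𝓝 0) ∧ A = range d := by
  have hinf : A.Infinite := fun hA_fin => by
    obtain ⟨a, ha, -⟩ := hsmall 1 one_pos
    obtain ⟨m, hm, hmin⟩ := A.exists_min_image id hA_fin ⟨a, ha⟩
    obtain ⟨b, hb, hbm⟩ := hsmall m (hA hm)
    exact (hmin b hb).not_gt hbm
  obtain ⟨d, hd, rfl⟩ := hinf.exists_strictAnti_range_eq fun a ha => hfin a (hA ha)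
  refine ⟨d, hd, tendsto_order.2
    ⟨fun a ha => .of_forall fun n => ha.trans (hA (mem_range_self n)), fun ε hε => ?_⟩, rfl⟩
  rw [← Nat.cofinite_eq_atTop]
  refine eventually_cofinite.2 ((hfin ε hε).preimage hd.injective.injOn |>.subset ?_)
  exact fun n hn => ⟨mem_range_self n, not_lt.1 hn⟩

lemma exists_strictAnti_tendsto_zero_eq_distanceSet (X : Type*) [MetricSpace X]
    [IsUltrametricDist X] [CompactSpace X] [Nonempty X] [∀ x : X, (𝓝[≠] x).NeBot] :
    ∃ d : ℕ → ℝ, StrictAnti d ∧ Tendsto d atTop (𝓝 0) ∧ distanceSet X = range d :=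
  exists_strictAnti_tendsto_zero_range_eq distanceSet_subset_Ioi
    (fun _ => exists_mem_distanceSet_lt) fun _ => IsUltrametricDist.finite_distanceSet_inter_Ici

namespace PiNat

variable {E : ℕ → Type*} {d : ℕ → ℝ}

open scoped Classical in
/-- `PiNat.dist` is the case `d n = (1 / 2) ^ n`. -/
noncomputable def firstDiffDist (d : ℕ → ℝ) (x y : ∀ n, E n) : ℝ :=
  if x = y then 0 else d (firstDiff x y)

lemma firstDiffDist_self (x : ∀ n, E n) : firstDiffDist d x x = 0 := by
  simp [firstDiffDist]

lemma firstDiffDist_of_ne {x y : ∀ n, E n} (h : x ≠ y) :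
    firstDiffDist d x y = d (firstDiff x y) := by
  simp [firstDiffDist, h]

lemma firstDiffDist_comm (x y : ∀ n, E n) : firstDiffDist d x y = firstDiffDist d y x := by
  rcases eq_or_ne x y with rfl | h
  · rfl
  rw [firstDiffDist_of_ne h, firstDiffDist_of_ne h.symm, firstDiff_comm]

lemma firstDiffDist_nonneg (hpos : ∀ n, 0 < d n) (x y : ∀ n, E n) :
    0 ≤ firstDiffDist d x y := by
  unfold firstDiffDist
  split_ifs
  exacts [le_rfl, (hpos _).le]

lemma firstDiffDist_triangle_max (hpos : ∀ n, 0 < d n) (hd : Antitone d) (x y z : ∀ n, E n) :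
    firstDiffDist d x z ≤ max (firstDiffDist d x y) (firstDiffDist d y z) := by
  rcases eq_or_ne x z with rfl | hxz
  · exact (firstDiffDist_self x).trans_le (le_max_of_le_left (firstDiffDist_nonneg hpos x y))
  rcases eq_or_ne x y with rfl | hxy
  · exact le_max_right _ _
  rcases eq_or_ne y z with rfl | hyz
  · exact le_max_left _ _
  rw [firstDiffDist_of_ne hxz, firstDiffDist_of_ne hxy, firstDiffDist_of_ne hyz, ← hd.map_min]
  exact hd (min_firstDiff_le x y z hxz)

lemma firstDiffDist_update {x : ∀ n, E n} {n : ℕ} {b : E n} (hb : b ≠ x n) :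
    firstDiffDist d x (update x n b) = d n := by
  have hne : x ≠ update x n b := fun h => hb (by simpa using (congr_fun h n).symm)
  rw [firstDiffDist_of_ne hne]
  refine congrArg d (le_antisymm ?_ ?_)
  · by_contra! h
    simpa [hb.symm] using apply_eq_of_lt_firstDiff h
  · rw [firstDiff_comm]
    exact (mem_cylinder_iff_le_firstDiff hne.symm n).1 (update_mem_cylinder x n b)

lemma firstDiffDist_le_of_mem_cylinder (hpos : ∀ n, 0 < d n) (hd : Antitone d)
    {x y : ∀ n, E n} {n : ℕ} (hy : y ∈ cylinder x n) : firstDiffDist d x y ≤ d n := by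
  rcases eq_or_ne x y with rfl | hxy
  · rw [firstDiffDist_self]
    exact (hpos n).le
  rw [firstDiffDist_of_ne hxy, firstDiff_comm]
  exact hd ((mem_cylinder_iff_le_firstDiff hxy.symm n).1 hy)

lemma mem_cylinder_of_firstDiffDist_lt (hd : Antitone d) {x y : ∀ n, E n} {n : ℕ}
    (h : firstDiffDist d x y < d n) : y ∈ cylinder x n := by
  rcases eq_or_ne x y with rfl | hxy
  · exact self_mem_cylinder x n
  rw [firstDiffDist_of_ne hxy] at h
  rw [mem_cylinder_iff_le_firstDiff hxy.symm, firstDiff_comm]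
  exact (hd.reflect_lt h).le

variable [∀ n, TopologicalSpace (E n)] [∀ n, DiscreteTopology (E n)]

lemma isOpen_iff_firstDiffDist (hpos : ∀ n, 0 < d n) (hd : Antitone d)
    (h0 : Tendsto d atTop (𝓝 0)) (s : Set (∀ n, E n)) :
    IsOpen s ↔ ∀ x ∈ s, ∃ ε > 0, ∀ y, firstDiffDist d x y < ε → y ∈ s := by
  have hbasis := isTopologicalBasis_cylinders E
  refine ⟨fun hs x hx => ?_, fun h => hbasis.isOpen_iff.2 fun x hx => ?_⟩
  · obtain ⟨_, ⟨y, n, rfl⟩, hxy, hys⟩ := hbasis.exists_subset_of_mem_open hx hs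
    rw [← mem_cylinder_iff_eq.1 hxy] at hys
    exact ⟨d n, hpos n, fun z hz => hys (mem_cylinder_of_firstDiffDist_lt hd hz)⟩
  · obtain ⟨ε, hε, hball⟩ := h x hx
    obtain ⟨n, hn⟩ := (h0.eventually (gt_mem_nhds hε)).exists
    exact ⟨cylinder x n, ⟨x, n, rfl⟩, self_mem_cylinder x n,
      fun y hy => hball y ((firstDiffDist_le_of_mem_cylinder hpos hd hy).trans_lt hn)⟩

/-- Its topology is the product topology itself, so the product's `CompactSpace` instance
applies. -/
noncomputable abbrev firstDiffMetricSpace (hpos : ∀ n, 0 < d n) (hd : Antitone d)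
    (h0 : Tendsto d atTop (𝓝 0)) : MetricSpace (∀ n, E n) :=
  MetricSpace.ofDistTopology (firstDiffDist d) firstDiffDist_self firstDiffDist_comm
    (fun x y z => (firstDiffDist_triangle_max hpos hd x y z).trans
      (max_le_add_of_nonneg (firstDiffDist_nonneg hpos x y) (firstDiffDist_nonneg hpos y z)))
    (isOpen_iff_firstDiffDist hpos hd h0)
    (fun _ _ h => by_contra fun hxy => (hpos _).ne' ((firstDiffDist_of_ne hxy).symm.trans h))

end PiNat

open PiNat in
lemma exists_compact_perfect_ultrametric_distanceSet_eq_range {d : ℕ → ℝ}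
    (hpos : ∀ n, 0 < d n) (hd : Antitone d) (h0 : Tendsto d atTop (𝓝 0)) :
    ∃ (X : Type) (_ : MetricSpace X), IsUltrametricDist X ∧ Nonempty X ∧
      (∀ x : X, (𝓝[≠] x).NeBot) ∧ CompactSpace X ∧ distanceSet X = range d := by
  let _ : MetricSpace (ℕ → Bool) := firstDiffMetricSpace hpos hd h0
  have hflip (x : ℕ → Bool) (n : ℕ) : dist x (update x n !(x n)) = d n :=
    firstDiffDist_update (Bool.not_ne_self _)
  refine ⟨ℕ → Bool, inferInstance, ⟨firstDiffDist_triangle_max hpos hd⟩, inferInstance,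
    fun x => ?_, inferInstanceAs (CompactSpace (ℕ → Bool)), ?_⟩
  · rw [← mem_closure_iff_nhdsWithin_neBot, Metric.mem_closure_iff]
    intro ε hε
    obtain ⟨n, hn⟩ := (h0.eventually (gt_mem_nhds hε)).exists
    exact ⟨update x n !(x n), fun h => Bool.not_ne_self _ (update_eq_self_iff.1 h),
      (hflip x n).trans_lt hn⟩
  · refine Subset.antisymm ?_ (range_subset_iff.2 fun n => ?_)
    · rintro _ ⟨x, y, hxy, rfl⟩
      exact ⟨_, (firstDiffDist_of_ne hxy).symm⟩
    · exact ⟨fun _ => false, _, fun h => Bool.not_ne_self _ (update_eq_self_iff.1 h.symm),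
        (hflip _ n).symm⟩

theorem stmt_11_general (A : Set ℝ) :
    (∃ (X : Type) (_ : MetricSpace X),
        (∀ x y z : X, dist x y ≤ max (dist x z) (dist z y)) ∧
        Nonempty X ∧ (∀ x : X, (nhdsWithin x {x}ᶜ).NeBot) ∧ CompactSpace X ∧
        A = {d : ℝ | ∃ x y : X, x ≠ y ∧ d = dist x y}) ↔
      ∃ d : ℕ → ℝ, StrictAnti d ∧ Filter.Tendsto d Filter.atTop (nhds 0) ∧
        A = Set.range d := by
  constructor
  · rintro ⟨X, _, hultra, _, _, _, rfl⟩
    have : IsUltrametricDist X := ⟨fun x y z => hultra x z y⟩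
    exact exists_strictAnti_tendsto_zero_eq_distanceSet X
  · rintro ⟨d, hd, h0, rfl⟩
    have hpos (n : ℕ) : 0 < d n :=
      (hd.antitone.le_of_tendsto h0 (n + 1)).trans_lt (hd n.lt_succ_self)
    obtain ⟨X, _, _, hne, hperf, hcpt, hdist⟩ :=
      exists_compact_perfect_ultrametric_distanceSet_eq_range hpos hd.antitone h0
    exact ⟨X, _, fun x y z => dist_triangle_max x z y, hne, hperf, hcpt, hdist.symm⟩

theorem stmt_11 (A : Set ℝ) (hA : A ⊆ Set.Ioi (0 : ℝ)) :
    (∃ (X : Type) (_ : MetricSpace X),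
        (∀ x y z : X, dist x y ≤ max (dist x z) (dist z y)) ∧
        Nonempty X ∧ (∀ x : X, (nhdsWithin x {x}ᶜ).NeBot) ∧ CompactSpace X ∧
        A = {d : ℝ | ∃ x y : X, x ≠ y ∧ d = dist x y}) ↔
      ∃ d : ℕ → ℝ, StrictAnti d ∧ Filter.Tendsto d Filter.atTop (nhds 0) ∧
        A = Set.range d :=
  stmt_11_general A
end

section
/- Let (X,d) be a nonempty perfect compact ultrametric space. Then every map φ : X → X that is locally contractive (every point has a neighborhood on which φ is Lipschitz with constant < 1) is not surjective. -/
theorem stmt_15 {X : Type*} [MetricSpace X] [Nonempty X] [CompactSpace X]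
    (hU : ∀ x y z : X, dist x y ≤ max (dist x z) (dist z y))
    (hperf : ∀ x : X, (nhdsWithin x {x}ᶜ).NeBot)
    (φ : X → X)
    (hlc : ∀ x : X, ∃ N ∈ nhds x, ∃ α ∈ Set.Ioo (0 : ℝ) 1,
      ∀ u ∈ N, ∀ v ∈ N, dist (φ u) (φ v) ≤ α * dist u v) :
    ¬ Function.Surjective φ := by
  intro hsurj
  choose N hN α hα hcontr using hlc
  have hball : ∀ x : X, ∃ ε > 0, Metric.ball x ε ⊆ N x := fun x =>
    Metric.mem_nhds_iff.mp (hN x)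
  choose r hr0 hrN using hball
  obtain ⟨t, -, hcov⟩ := isCompact_univ.elim_nhds_subcover (fun x => Metric.ball x (r x))
    (fun x _ => Metric.ball_mem_nhds x (hr0 x))
  obtain ⟨x₀⟩ := ‹Nonempty X›
  have ht : t.Nonempty := by
    rcases Set.mem_iUnion₂.mp (hcov (Set.mem_univ x₀)) with ⟨i, hi, -⟩
    exact ⟨i, hi⟩
  set δ : ℝ := t.inf' ht r with hδdef
  have hδ0 : 0 < δ := by
    rw [hδdef, Finset.lt_inf'_iff]
    exact fun i _ => hr0 i
  set A : ℝ := t.sup' ht α with hAdef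
  have hA1 : A < 1 := by
    rw [hAdef, Finset.sup'_lt_iff]
    exact fun i _ => (hα i).2
  have hA0 : 0 ≤ A := by
    obtain ⟨i, hi⟩ := ht
    exact le_trans (hα i).1.le (Finset.le_sup' α hi)
  -- uniform local contraction on balls of radius δ
  have H : ∀ y u v : X, dist u y < δ → dist v y < δ →
      dist (φ u) (φ v) ≤ A * dist u v := by
    intro y u v hu hv
    rcases Set.mem_iUnion₂.mp (hcov (Set.mem_univ y)) with ⟨i, hi, hyi⟩
    rw [Metric.mem_ball] at hyi
    have hδr : δ ≤ r i := Finset.inf'_le r hi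
    have hui : u ∈ N i := hrN i (by
      rw [Metric.mem_ball]
      exact lt_of_le_of_lt (hU u i y) (max_lt (lt_of_lt_of_le hu hδr) hyi))
    have hvi : v ∈ N i := hrN i (by
      rw [Metric.mem_ball]
      exact lt_of_le_of_lt (hU v i y) (max_lt (lt_of_lt_of_le hv hδr) hyi))
    exact le_trans (hcontr i u hui v hvi)
      (mul_le_mul_of_nonneg_right (Finset.le_sup' α hi) dist_nonneg)
  -- the equivalence relation "dist < δ"
  letI s : Setoid X := ⟨fun a b => dist a b < δ,
    ⟨fun a => by simpa using hδ0,
     fun {a b} h => by rwa [dist_comm] at h,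
     fun {a b c} hab hbc => lt_of_le_of_lt (hU a c b) (max_lt hab hbc)⟩⟩
  have hresp : ∀ a b : X, dist a b < δ → dist (φ a) (φ b) < δ := by
    intro a b h
    have h1 : dist (φ a) (φ b) ≤ A * dist a b :=
      H a a b (by simpa using hδ0) (by rwa [dist_comm] at h)
    have h2 : A * dist a b ≤ dist a b := mul_le_of_le_one_left dist_nonneg hA1.le
    linarith
  let Φ : Quotient s → Quotient s := Quotient.map φ hresp
  -- the quotient is finite
  obtain ⟨u, -, hcov2⟩ := (isCompact_univ (X := X)).elim_nhds_subcover (fun y => Metric.ball y δ)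
    (fun y _ => Metric.ball_mem_nhds y hδ0)
  haveI hQfin : Finite (Quotient s) := by
    apply Finite.of_surjective (fun i : {i // i ∈ u} => Quotient.mk s i.1)
    intro q
    obtain ⟨y, rfl⟩ := Quotient.exists_rep q
    rcases Set.mem_iUnion₂.mp (hcov2 (Set.mem_univ y)) with ⟨i, hi, hyi⟩
    rw [Metric.mem_ball] at hyi
    exact ⟨⟨i, hi⟩, Quotient.sound (show dist i y < δ by rwa [dist_comm] at hyi)⟩
  haveI : Nonempty (Quotient s) := ⟨Quotient.mk s x₀⟩
  set C : Quotient s → Set X := fun q => {x | Quotient.mk s x = q} with hC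
  have hbdd : ∀ S : Set X, Bornology.IsBounded S := fun S =>
    isCompact_univ.isBounded.subset (Set.subset_univ _)
  -- each class has positive diameter (perfectness)
  have hCpos : ∀ q, 0 < Metric.diam (C q) := by
    intro q
    obtain ⟨y, rfl⟩ := Quotient.exists_rep q
    have hmem : Metric.ball y δ ∩ {y}ᶜ ∈ nhdsWithin y {y}ᶜ :=
      Filter.inter_mem (mem_nhdsWithin_of_mem_nhds (Metric.ball_mem_nhds y hδ0))
        self_mem_nhdsWithin
    haveI := hperf y
    obtain ⟨z, hz1, hz2⟩ := Filter.nonempty_of_mem hmem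
    rw [Metric.mem_ball] at hz1
    have hzne : z ≠ y := hz2
    have hzC : z ∈ C (Quotient.mk s y) := Quotient.sound hz1
    have hyC : y ∈ C (Quotient.mk s y) := rfl
    calc (0:ℝ) < dist z y := dist_pos.mpr hzne
      _ ≤ Metric.diam (C (Quotient.mk s y)) :=
          Metric.dist_le_diam_of_mem (hbdd _) hzC hyC
  obtain ⟨q₀, hq₀⟩ := Finite.exists_max (fun q => Metric.diam (C q))
  have hΦsurj : Function.Surjective Φ := by
    intro q
    obtain ⟨y, rfl⟩ := Quotient.exists_rep q
    obtain ⟨a, rfl⟩ := hsurj y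
    exact ⟨Quotient.mk s a, rfl⟩
  have hΦinj : Function.Injective Φ := Finite.injective_iff_surjective.mpr hΦsurj
  obtain ⟨p₀, hp₀⟩ := hΦsurj q₀
  have hsub : C q₀ ⊆ φ '' C p₀ := by
    intro x hx
    obtain ⟨a, rfl⟩ := hsurj x
    have h1 : Φ (Quotient.mk s a) = q₀ := hx
    exact ⟨a, hΦinj (h1.trans hp₀.symm), rfl⟩
  have hdiam : Metric.diam (φ '' C p₀) ≤ A * Metric.diam (C p₀) := by
    apply Metric.diam_le_of_forall_dist_le (mul_nonneg hA0 Metric.diam_nonneg)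
    rintro _ ⟨w, hw, rfl⟩ _ ⟨v, hv, rfl⟩
    have hwv : dist w v < δ := Quotient.exact ((hw : Quotient.mk s w = p₀).trans
      (hv : Quotient.mk s v = p₀).symm)
    calc dist (φ w) (φ v) ≤ A * dist w v :=
          H w w v (by simpa using hδ0) (by rwa [dist_comm] at hwv)
      _ ≤ A * Metric.diam (C p₀) :=
          mul_le_mul_of_nonneg_left (Metric.dist_le_diam_of_mem (hbdd _) hw hv) hA0
  have h1 : Metric.diam (C q₀) ≤ Metric.diam (φ '' C p₀) := Metric.diam_mono hsub (hbdd _)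
  have h2 : Metric.diam (C p₀) ≤ Metric.diam (C q₀) := hq₀ p₀
  nlinarith [hCpos q₀]
end

section
/- Let X be a perfect Polish space. Then the collection K_p(X) of perfect compact subsets of X is a comeager subset of the hyperspace K(X) of compact subsets of X with the Vietoris topology. -/
open TopologicalSpace Metric EMetric Set

private lemma near_point {X : Type*} [MetricSpace X]
    (hperf : ∀ x : X, (nhdsWithin x {x}ᶜ).NeBot) (x : X) {ε : ℝ} (hε : 0 < ε) :
    ∃ y : X, y ≠ x ∧ dist x y < ε := by
  have h1 : Metric.ball x ε ∈ nhdsWithin x {x}ᶜ :=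
    mem_nhdsWithin_of_mem_nhds (Metric.ball_mem_nhds x hε)
  have h2 : ({x}ᶜ : Set X) ∈ nhdsWithin x {x}ᶜ := self_mem_nhdsWithin
  have := hperf x
  obtain ⟨y, hy1, hy2⟩ := Filter.nonempty_of_mem (Filter.inter_mem h1 h2)
  exact ⟨y, by simpa using hy2, by rwa [dist_comm, ← Metric.mem_ball]⟩

theorem stmt_18 {X : Type*} [MetricSpace X] [TopologicalSpace.SeparableSpace X]
    [CompleteSpace X]
    (hperf : ∀ x : X, (nhdsWithin x {x}ᶜ).NeBot) :
    {K : TopologicalSpace.NonemptyCompacts X | Perfect (K : Set X)} ∈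
      residual (TopologicalSpace.NonemptyCompacts X) := by
  set G : ℕ → Set (NonemptyCompacts X) := fun n =>
    {K | ∀ x ∈ (K : Set X), ∃ y ∈ (K : Set X), y ≠ x ∧ dist x y < 1 / (n + 1)} with hG
  have hδ : ∀ n : ℕ, (0 : ℝ) < 1 / (n + 1) := fun n => by positivity
  have fin : ∀ K L : NonemptyCompacts X, hausdorffEdist (K : Set X) (L : Set X) ≠ ⊤ :=
    fun K L => hausdorffEdist_ne_top_of_nonempty_of_bounded K.nonempty L.nonempty
      K.isCompact.isBounded L.isCompact.isBounded
  -- each G n is open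
  have hopen : ∀ n, IsOpen (G n) := by
    intro n
    rw [Metric.isOpen_iff]
    intro K hK
    choose! y hyK hyne hyd using hK
    set r : X → ℝ := fun x => min (dist x (y x)) (1 / (n + 1) - dist x (y x)) / 4 with hr
    have hrpos : ∀ x ∈ (K : Set X), 0 < r x := by
      intro x hx
      have h1 : 0 < dist x (y x) := dist_pos.2 (Ne.symm (hyne x hx))
      have h2 : dist x (y x) < 1 / (n + 1) := hyd x hx
      have : 0 < min (dist x (y x)) (1 / (n + 1) - dist x (y x)) :=
        lt_min h1 (by linarith)
      show 0 < min (dist x (y x)) (1 / (n + 1) - dist x (y x)) / 4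
      linarith
    obtain ⟨t, htK, htcov⟩ := K.isCompact.elim_nhds_subcover (fun x => Metric.ball x (r x))
      (fun x hx => Metric.ball_mem_nhds x (hrpos x hx))
    have htne : t.Nonempty := by
      obtain ⟨z, hz⟩ := K.nonempty
      obtain ⟨i, hi, _⟩ := Set.mem_iUnion₂.1 (htcov hz)
      exact ⟨i, hi⟩
    set δ : ℝ := t.inf' htne r with hδdef
    have hδpos : 0 < δ := by
      rw [hδdef, Finset.lt_inf'_iff]
      exact fun i hi => hrpos i (htK i hi)
    refine ⟨δ, hδpos, fun L hL => ?_⟩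
    rw [Metric.mem_ball, NonemptyCompacts.dist_eq] at hL
    intro z hz
    obtain ⟨x', hx'K, hzx'⟩ := exists_dist_lt_of_hausdorffDist_lt hz hL (fin L K)
    obtain ⟨i, hit, hx'i⟩ := Set.mem_iUnion₂.1 (htcov hx'K)
    have hiK : i ∈ (K : Set X) := htK i hit
    have hLK : hausdorffDist (K : Set X) (L : Set X) < δ := by
      rwa [hausdorffDist_comm]
    obtain ⟨w, hwL, hyw⟩ := exists_dist_lt_of_hausdorffDist_lt (hyK i hiK) hLK (fin K L)
    have hδr : δ ≤ r i := Finset.inf'_le _ hit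
    have hd1 : 0 < dist i (y i) := dist_pos.2 (Ne.symm (hyne i hiK))
    have hd2 : dist i (y i) < 1 / (n + 1) := hyd i hiK
    have hri1 : r i ≤ dist i (y i) / 4 := by
      rw [hr]; have := min_le_left (dist i (y i)) (1 / (n + 1) - dist i (y i)); linarith
    have hri2 : r i ≤ (1 / (n + 1) - dist i (y i)) / 4 := by
      rw [hr]; have := min_le_right (dist i (y i)) (1 / (n + 1) - dist i (y i)); linarith
    have hx'i' : dist x' i < r i := Metric.mem_ball.1 hx'i
    refine ⟨w, hwL, ?_, ?_⟩
    · -- w ≠ z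
      intro hwz
      subst hwz
      have t1 : dist i (y i) ≤ dist i x' + dist x' w + dist w (y i) := dist_triangle4 _ _ _ _
      have c1 : dist i x' = dist x' i := dist_comm _ _
      have c2 : dist x' w = dist w x' := dist_comm _ _
      have c3 : dist w (y i) = dist (y i) w := dist_comm _ _
      linarith [hzx', hyw]
    · -- dist z w < 1/(n+1)
      have t1 : dist z w ≤ dist z x' + dist x' i + dist i w := dist_triangle4 _ _ _ _
      have t2 : dist i w ≤ dist i (y i) + dist (y i) w := dist_triangle _ _ _
      linarith [hzx', hyw]
  -- each G n is dense
  have hdense : ∀ n, Dense (G n) := by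
    intro n
    rw [Metric.dense_iff]
    intro K ρ hρ
    set ε : ℝ := min ρ (1 / (n + 1)) / 3 with hε
    have hεpos : 0 < ε := by
      have := hδ n
      have : 0 < min ρ (1 / (n + 1)) := lt_min hρ (hδ n)
      positivity
    have hε1 : ε < ρ := by
      have := min_le_left ρ (1 / (n + 1)); rw [hε]; linarith
    have hε2 : 3 * ε ≤ 1 / (n + 1) := by
      have := min_le_right ρ (1 / (n + 1)); rw [hε]; linarith
    choose f hf1 hf2 using fun x : X => near_point hperf x hεpos
    obtain ⟨s, hsK, hsfin, hscov⟩ := K.isCompact.finite_cover_balls hεpos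
    set Lset : Set X := (K : Set X) ∪ f '' s with hLset
    have hLcomp : IsCompact Lset := K.isCompact.union ((hsfin.image f).isCompact)
    have hLne : Lset.Nonempty := K.nonempty.mono subset_union_left
    set L : NonemptyCompacts X := ⟨⟨Lset, hLcomp⟩, hLne⟩ with hLdef
    have hLcoe : (L : Set X) = Lset := rfl
    refine ⟨L, ?_, ?_⟩
    · -- L ∈ ball K ρ
      rw [Metric.mem_ball, NonemptyCompacts.dist_eq, hLcoe]
      have : hausdorffDist Lset (K : Set X) ≤ ε := by
        apply hausdorffDist_le_of_mem_dist hεpos.le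
        · rintro x (hx | ⟨i, hi, rfl⟩)
          · exact ⟨x, hx, by simpa using hεpos.le⟩
          · exact ⟨i, hsK hi, by rw [dist_comm]; exact (hf2 i).le⟩
        · intro x hx
          exact ⟨x, Or.inl hx, by simpa using hεpos.le⟩
      linarith
    · -- L ∈ G n
      intro z hz
      rw [hLcoe, hLset] at hz
      rcases hz with hz | ⟨i, hi, rfl⟩
      · obtain ⟨i, hi, hzi⟩ := Set.mem_iUnion₂.1 (hscov hz)
        rw [Metric.mem_ball] at hzi
        by_cases hfz : f i = z
        · refine ⟨i, Or.inl (hsK hi), ?_, ?_⟩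
          · rintro rfl; exact hf1 i hfz
          · calc dist z i = dist i (f i) := by rw [← hfz, dist_comm]
            _ < ε := hf2 i
            _ < 1 / (n + 1) := by linarith
        · refine ⟨f i, Or.inr ⟨i, hi, rfl⟩, hfz, ?_⟩
          have : dist i (f i) < ε := hf2 i
          calc dist z (f i) ≤ dist z i + dist i (f i) := dist_triangle _ _ _
          _ < ε + ε := by linarith
          _ < 1 / (n + 1) := by linarith
      · refine ⟨i, Or.inl (hsK hi), ?_, ?_⟩
        · exact fun h => hf1 i h.symm
        · calc dist (f i) i = dist i (f i) := dist_comm _ _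
          _ < ε := hf2 i
          _ < 1 / (n + 1) := by linarith
  -- intersection is contained in the perfect sets
  have hsub : (⋂ n, G n) ⊆ {K : NonemptyCompacts X | Perfect (K : Set X)} := by
    intro K hK
    refine ⟨K.isCompact.isClosed, ?_⟩
    intro x hx
    rw [accPt_iff_nhds]
    intro U hU
    obtain ⟨ε, hεpos, hεU⟩ := Metric.mem_nhds_iff.1 hU
    obtain ⟨n, hn⟩ := exists_nat_one_div_lt hεpos
    obtain ⟨y, hyK, hyne, hyd⟩ := (Set.mem_iInter.1 hK n) x hx
    refine ⟨y, ⟨hεU ?_, hyK⟩, hyne⟩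
    rw [Metric.mem_ball, dist_comm]
    calc dist x y < 1 / (n + 1) := hyd
    _ < ε := hn
  exact Filter.mem_of_superset
    ((countable_iInter_mem.2 fun n => residual_of_dense_open (hopen n) (hdense n)))
    hsub
end
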